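/- arXiv:2412.17021 — 4 statements merged into one kernel-verified Lean document; each statement's English description precedes it below -/
import Mathlib

section
/- Let $\Phi: [a,b] \to \mathbb{R}$ be concave with $a < b$, and define the secant (chord) function $\Gamma(t) = \Phi(a) + \frac{\Phi(b)-\Phi(a)}{b-a}(t-a)$. Let $\Gamma^{OA}$ be any affine function with $\Gamma^{OA}(t) \geq \Phi(t)$ for all $t \in [a,b]$. Then $\max_{t \in [a,b]} (\Phi(t) - \Gamma(t)) \leq \max\{\Gamma^{OA}(a) - \Phi(a),\ \Gamma^{OA}(b) - \Phi(b)\}$. -/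
/-!
Since `Φ ≤ Γᴼᴬ` on `[a, b]`, the gap `Φ - Γ` is dominated by `Γᴼᴬ - Γ`. This is affine, hence
convex, so on `[a, b]` it is at most its larger endpoint value; and at the endpoints the chord `Γ`
agrees with `Φ`.
-/

open Set

theorem convexOn_mul_add (c d : ℝ) : ConvexOn ℝ univ fun t => c * t + d :=
  ((LinearMap.lsmul ℝ ℝ c).convexOn convex_univ).add_const d

/-- Holds also for `a = b`, where `(f b - f a) / (b - a) = 0`. -/
theorem add_div_sub_mul_sub_eq {k : Type*} [Field k] (f : k → k) (a b : k) :
    f a + (f b - f a) / (b - a) * (b - a) = f b := by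
  simpa [slope_def_field, add_comm, mul_comm] using sub_smul_slope_vadd f a b

theorem stmt_5_general (a b : ℝ) (Φ ΓOA : ℝ → ℝ)
    (haff : ∃ c d : ℝ, ∀ t, ΓOA t = c * t + d)
    (hmaj : ∀ t ∈ Set.Icc a b, Φ t ≤ ΓOA t) :
    ∀ t ∈ Set.Icc a b,
      Φ t - (Φ a + (Φ b - Φ a) / (b - a) * (t - a)) ≤
        max (ΓOA a - Φ a) (ΓOA b - Φ b) := by
  obtain ⟨c, d, hcd⟩ := haff
  intro t ht
  set s := (Φ b - Φ a) / (b - a)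
  have hgap_affine : ∀ u, ΓOA u - (Φ a + s * (u - a)) = (c - s) * u + (d - Φ a + s * a) := by
    intro u; rw [hcd]; ring
  calc Φ t - (Φ a + s * (t - a)) ≤ ΓOA t - (Φ a + s * (t - a)) :=
        sub_le_sub_right (hmaj t ht) _
    _ ≤ max (ΓOA a - (Φ a + s * (a - a))) (ΓOA b - (Φ a + s * (b - a))) := by
      simp only [hgap_affine]
      exact (convexOn_mul_add _ _).le_max_of_mem_Icc trivial trivial ht
    _ = max (ΓOA a - Φ a) (ΓOA b - Φ b) := by
      rw [add_div_sub_mul_sub_eq, sub_self, mul_zero, add_zero]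

/-- the gap between a concave `Φ` and its chord is bounded by the
maximum endpoint gap of any affine outer approximation. -/
theorem stmt_5 (a b : ℝ) (hab : a < b) (Φ ΓOA : ℝ → ℝ)
    (hconc : ConcaveOn ℝ (Set.Icc a b) Φ)
    (haff : ∃ c d : ℝ, ∀ t, ΓOA t = c * t + d)
    (hmaj : ∀ t ∈ Set.Icc a b, Φ t ≤ ΓOA t) :
    ∀ t ∈ Set.Icc a b,
      Φ t - (Φ a + (Φ b - Φ a) / (b - a) * (t - a)) ≤
        max (ΓOA a - Φ a) (ΓOA b - Φ b) :=
  stmt_5_general a b Φ ΓOA haff hmaj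
end

section
/- Let $\Psi: [a,U] \to \mathbb{R}$ be continuous, strictly concave, and differentiable on $(a,U)$ with $a < U$. For $t \in (a,U]$, define $\Lambda(t) = \max_{z \in [a,t]} \big\{ \Psi(z) - \Psi(a) - \frac{\Psi(t)-\Psi(a)}{t-a}(z-a) \big\}$, the maximum gap between $\Psi$ and its chord from $a$ to $t$. Then $\Lambda$ is strictly increasing on $(a,U]$. -/
/-!
Write `Λ(t) = sup_{z ∈ [a,t]} gap_t(z)` where `gap_t(z) = Ψ z - Ψ a - s(t) (z - a)` and `s(t)` is the
slope of the chord from `a` to `t`. Strict concavity makes `s` strictly decreasing, so for `z > a`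
the gap `gap_t(z)` is strictly increasing in `t`. The maximum of `gap_t` over `[a,t]` is attained
at some `z > a`, since `gap_t(a) = 0` while `gap_t` is positive inside `(a,t)`. Hence for
`t₁ < t₂`, `Λ(t₁) = gap_{t₁}(z) < gap_{t₂}(z) ≤ Λ(t₂)`.
-/

open Set

noncomputable section

def chordGap (Ψ : ℝ → ℝ) (a t z : ℝ) : ℝ :=
  Ψ z - Ψ a - (Ψ t - Ψ a) / (t - a) * (z - a)

variable {s : Set ℝ} {Ψ : ℝ → ℝ} {a t z : ℝ}

theorem chordGap_self_left : chordGap Ψ a t a = 0 := by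
  simp [chordGap]

theorem ContinuousOn.chordGap (hΨ : ContinuousOn Ψ s) : ContinuousOn (chordGap Ψ a t) s := by
  unfold _root_.chordGap
  fun_prop

theorem chordGap_eq_mul_sub_slope (hza : z ≠ a) :
    chordGap Ψ a t z = (z - a) * ((Ψ z - Ψ a) / (z - a) - (Ψ t - Ψ a) / (t - a)) := by
  have : z - a ≠ 0 := sub_ne_zero.2 hza
  unfold chordGap
  field_simp

namespace StrictConcaveOn

theorem chordGap_pos (hΨ : StrictConcaveOn ℝ s Ψ) (ha : a ∈ s) (hz : z ∈ s) (ht : t ∈ s)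
    (haz : a < z) (hzt : z < t) : 0 < chordGap Ψ a t z := by
  rw [chordGap_eq_mul_sub_slope haz.ne']
  exact mul_pos (sub_pos.2 haz) <|
    sub_pos.2 <| hΨ.secant_strict_mono ha hz ht haz.ne' (haz.trans hzt).ne' hzt

theorem chordGap_lt_chordGap {t₁ t₂ : ℝ} (hΨ : StrictConcaveOn ℝ s Ψ) (ha : a ∈ s)
    (ht₁ : t₁ ∈ s) (ht₂ : t₂ ∈ s) (ht₁a : t₁ ≠ a) (ht₂a : t₂ ≠ a) (h12 : t₁ < t₂)
    (haz : a < z) : chordGap Ψ a t₁ z < chordGap Ψ a t₂ z := by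
  rw [chordGap_eq_mul_sub_slope haz.ne', chordGap_eq_mul_sub_slope haz.ne']
  have := hΨ.secant_strict_mono ha ht₁ ht₂ ht₁a ht₂a h12
  exact mul_lt_mul_of_pos_left (by linarith) (sub_pos.2 haz)

theorem exists_chordGap_sSup_eq (hΨ : StrictConcaveOn ℝ (Icc a t) Ψ)
    (hc : ContinuousOn Ψ (Icc a t)) (hat : a < t) :
    ∃ z ∈ Ioc a t, sSup (chordGap Ψ a t '' Icc a t) = chordGap Ψ a t z := by
  obtain ⟨z, hz, hsup, hmax⟩ :=
    isCompact_Icc.exists_sSup_image_eq_and_ge (nonempty_Icc.2 hat.le) hc.chordGap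
  refine ⟨z, ⟨lt_of_le_of_ne hz.1 ?_, hz.2⟩, hsup⟩
  rintro rfl
  have hmid : 0 < chordGap Ψ a t ((a + t) / 2) :=
    hΨ.chordGap_pos (left_mem_Icc.2 hat.le) ⟨by linarith, by linarith⟩
      (right_mem_Icc.2 hat.le) (by linarith) (by linarith)
  have hle := hmax ((a + t) / 2) ⟨by linarith, by linarith⟩
  rw [chordGap_self_left] at hle
  linarith

end StrictConcaveOn

end

theorem stmt_8_general (a U : ℝ) (Ψ : ℝ → ℝ)
    (hcont : ContinuousOn Ψ (Set.Icc a U))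
    (hconc : StrictConcaveOn ℝ (Set.Icc a U) Ψ) :
    StrictMonoOn
      (fun t => sSup ((fun z => Ψ z - Ψ a - (Ψ t - Ψ a) / (t - a) * (z - a)) ''
        Set.Icc a t))
      (Set.Ioc a U) := by
  show StrictMonoOn (fun t => sSup (chordGap Ψ a t '' Icc a t)) (Ioc a U)
  intro t₁ ht₁ t₂ ht₂ h12
  have hsub : ∀ {t}, t ∈ Ioc a U → Icc a t ⊆ Icc a U := fun ht => Icc_subset_Icc_right ht.2
  have hmem : ∀ {t}, t ∈ Ioc a U → t ∈ Icc a U := fun ht => ⟨ht.1.le, ht.2⟩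
  obtain ⟨z, hz, hsup⟩ := (hconc.subset (hsub ht₁) (convex_Icc a t₁)).exists_chordGap_sSup_eq
    (hcont.mono (hsub ht₁)) ht₁.1
  have hbdd : BddAbove (chordGap Ψ a t₂ '' Icc a t₂) :=
    (isCompact_Icc.image_of_continuousOn ((hcont.mono (hsub ht₂)).chordGap)).bddAbove
  calc sSup (chordGap Ψ a t₁ '' Icc a t₁)
      = chordGap Ψ a t₁ z := hsup
    _ < chordGap Ψ a t₂ z :=
        hconc.chordGap_lt_chordGap (left_mem_Icc.2 (ht₁.1.trans_le ht₁.2).le) (hmem ht₁) (hmem ht₂)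
          ht₁.1.ne' ht₂.1.ne' h12 hz.1
    _ ≤ sSup (chordGap Ψ a t₂ '' Icc a t₂) :=
        le_csSup hbdd ⟨z, ⟨hz.1.le, hz.2.trans h12.le⟩, rfl⟩

/-- the maximum gap between a strictly concave function and its
chord from `a` to `t` is strictly increasing in `t`. -/
theorem stmt_8 (a U : ℝ) (haU : a < U) (Ψ : ℝ → ℝ)
    (hcont : ContinuousOn Ψ (Set.Icc a U))
    (hconc : StrictConcaveOn ℝ (Set.Icc a U) Ψ)
    (hdiff : DifferentiableOn ℝ Ψ (Set.Ioo a U)) :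
    StrictMonoOn
      (fun t => sSup ((fun z => Ψ z - Ψ a - (Ψ t - Ψ a) / (t - a) * (z - a)) ''
        Set.Icc a t))
      (Set.Ioc a U) :=
  stmt_8_general a U Ψ hcont hconc
end

section
/- Let $\Psi: [L,U] \to \mathbb{R}$ be twice continuously differentiable, strictly concave with $0 < \ell \leq -\Psi''(z)$ for all $z \in [L,U]$, and fix $\epsilon > 0$. Suppose $L = c_1 < c_2 < \cdots < c_{K+1} = U$ are points such that for every $k \in [K]$, the maximum gap between $\Psi$ and its chord from $c_k$ to $c_{k+1}$ on $[c_k, c_{k+1}]$ is at most $\epsilon$. Then $K \geq \frac{(U-L)\sqrt{\ell}}{2\sqrt{2\epsilon}}$. -/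
/-!
Adding `ℓ z² / 2` to `Ψ` keeps it concave, because `Ψ'' ≤ -ℓ`. Midpoint concavity of
`Ψ + ℓ z² / 2` then shows that the gap between `Ψ` and any chord over `[a, b]` is at least
`ℓ (b - a)² / 8` at `(a + b) / 2`. So every segment of the partition has length at most
`√(8ε / ℓ)`, and summing over the `K` segments gives `U - L ≤ K √(8ε / ℓ)`.
-/

open Set

noncomputable def chord (f : ℝ → ℝ) (a b z : ℝ) : ℝ :=
  f a + (f b - f a) / (b - a) * (z - a)

theorem chord_midpoint (f : ℝ → ℝ) {a b : ℝ} (hab : a ≠ b) :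
    chord f a b ((a + b) / 2) = (f a + f b) / 2 := by
  have : b - a ≠ 0 := sub_ne_zero.2 hab.symm
  unfold chord
  field_simp
  ring

theorem concaveOn_add_mul_sq_of_le_neg_deriv2 {D : Set ℝ} (hD : Convex ℝ D)
    {f f' f'' : ℝ → ℝ} {ℓ : ℝ}
    (hf : ∀ x ∈ D, HasDerivAt f (f' x) x) (hf' : ∀ x ∈ D, HasDerivAt f' (f'' x) x)
    (hℓ : ∀ x ∈ D, ℓ ≤ -f'' x) :
    ConcaveOn ℝ D (fun x => f x + ℓ / 2 * x ^ 2) := by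
  have hsq : ∀ x, HasDerivAt (fun x => ℓ / 2 * x ^ 2) (ℓ * x) x := fun x =>
    ((hasDerivAt_pow 2 x).const_mul (ℓ / 2)).congr_deriv (by push_cast; ring)
  have hlin : ∀ x, HasDerivAt (fun x => ℓ * x) ℓ x := fun x => by
    simpa using (hasDerivAt_id x).const_mul ℓ
  refine concaveOn_of_hasDerivWithinAt2_nonpos (f' := fun x => f' x + ℓ * x)
    (f'' := fun x => f'' x + ℓ) hD ?_ ?_ ?_ ?_
  · exact fun x hx => ((hf x hx).add (hsq x)).continuousAt.continuousWithinAt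
  · exact fun x hx => ((hf x (interior_subset hx)).add (hsq x)).hasDerivWithinAt
  · exact fun x hx => ((hf' x (interior_subset hx)).add (hlin x)).hasDerivWithinAt
  · intro x hx
    linarith [hℓ x (interior_subset hx)]

theorem mul_sq_le_sub_chord_midpoint {D : Set ℝ} {f : ℝ → ℝ} {ℓ : ℝ}
    (hconc : ConcaveOn ℝ D (fun x => f x + ℓ / 2 * x ^ 2)) {a b : ℝ} (ha : a ∈ D) (hb : b ∈ D)
    (hab : a ≠ b) :
    ℓ / 8 * (b - a) ^ 2 ≤ f ((a + b) / 2) - chord f a b ((a + b) / 2) := by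
  have hmid := hconc.2 ha hb (by norm_num : (0 : ℝ) ≤ 1 / 2) (by norm_num : (0 : ℝ) ≤ 1 / 2)
    (by norm_num)
  simp only [smul_eq_mul, show (1 / 2 : ℝ) * a + 1 / 2 * b = (a + b) / 2 by ring] at hmid
  rw [chord_midpoint f hab]
  -- the quadratic part contributes `ℓ / 2 * ((a² + b²) / 2 - ((a + b) / 2)²) = ℓ / 8 * (b - a)²`
  nlinarith [hmid]

theorem sub_le_sqrt_of_sub_chord_le {D : Set ℝ} {f : ℝ → ℝ} {ℓ ε : ℝ}
    (hconc : ConcaveOn ℝ D (fun x => f x + ℓ / 2 * x ^ 2)) (hℓ : 0 < ℓ) {a b : ℝ}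
    (ha : a ∈ D) (hb : b ∈ D) (hab : a < b) (hgap : ∀ z ∈ Icc a b, f z - chord f a b z ≤ ε) :
    b - a ≤ √(8 * ε / ℓ) := by
  have hmid := mul_sq_le_sub_chord_midpoint hconc ha hb hab.ne
  have hgap_mid := hgap ((a + b) / 2) ⟨by linarith, by linarith⟩
  refine Real.le_sqrt_of_sq_le ?_
  rw [le_div_iff₀ hℓ]
  linarith

theorem sub_le_nsmul_of_forall_succ_sub_le {α : Type*} [AddCommGroup α] [PartialOrder α]
    [IsOrderedAddMonoid α] {n : ℕ} (c : Fin (n + 1) → α) {d : α}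
    (h : ∀ i : Fin n, c i.succ - c i.castSucc ≤ d) :
    c (Fin.last n) - c 0 ≤ n • d := by
  induction n with
  | zero => simp
  | succ n ih =>
    have hinit := ih (fun i => c i.castSucc) fun i => h i.castSucc
    have hlast := h (Fin.last n)
    rw [Fin.castSucc_zero] at hinit
    rw [succ_nsmul', ← sub_add_sub_cancel _ (c (Fin.last n).castSucc)]
    exact add_le_add hlast hinit

/-- lower bound on the number `K` of segments of any piecewise
linear inner approximation with accuracy `ε` of a strictly concave function. -/
theorem stmt_11 (L U : ℝ) (K : ℕ) (Ψ Ψ' Ψ'' : ℝ → ℝ)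
    (hd1 : ∀ z ∈ Set.Icc L U, HasDerivAt Ψ (Ψ' z) z)
    (hd2 : ∀ z ∈ Set.Icc L U, HasDerivAt Ψ' (Ψ'' z) z)
    (ℓ : ℝ) (hℓ : 0 < ℓ) (hcurv : ∀ z ∈ Set.Icc L U, ℓ ≤ -Ψ'' z)
    (ε : ℝ)
    (c : Fin (K + 1) → ℝ) (hmono : StrictMono c)
    (h0 : c ⟨0, by omega⟩ = L) (hlastpt : c ⟨K, by omega⟩ = U)
    (hgap : ∀ k : Fin K, ∀ z ∈ Set.Icc (c ⟨k.1, by omega⟩) (c ⟨k.1 + 1, by omega⟩),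
      Ψ z - (Ψ (c ⟨k.1, by omega⟩) +
        (Ψ (c ⟨k.1 + 1, by omega⟩) - Ψ (c ⟨k.1, by omega⟩)) /
          (c ⟨k.1 + 1, by omega⟩ - c ⟨k.1, by omega⟩) * (z - c ⟨k.1, by omega⟩)) ≤ ε) :
    (U - L) * Real.sqrt ℓ / (2 * Real.sqrt (2 * ε)) ≤ (K : ℝ) := by
  rw [Fin.mk_zero] at h0
  change c (Fin.last K) = U at hlastpt
  have hconc := concaveOn_add_mul_sq_of_le_neg_deriv2 (convex_Icc L U) hd1 hd2 hcurv
  have hmem : ∀ i, c i ∈ Icc L U := fun i =>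
    ⟨h0 ▸ hmono.monotone (Fin.zero_le i), hlastpt ▸ hmono.monotone (Fin.le_last i)⟩
  have hseg : ∀ k : Fin K, c k.succ - c k.castSucc ≤ √(8 * ε / ℓ) := fun k =>
    sub_le_sqrt_of_sub_chord_le hconc hℓ (hmem _) (hmem _) (hmono k.castSucc_lt_succ) (hgap k)
  have htotal : U - L ≤ K * √(8 * ε / ℓ) := by
    simpa [h0, hlastpt] using sub_le_nsmul_of_forall_succ_sub_le c hseg
  have hsqrt : √(8 * ε / ℓ) * √ℓ = 2 * √(2 * ε) := by
    rw [← Real.sqrt_mul' _ hℓ.le, div_mul_cancel₀ _ hℓ.ne', show 8 * ε = 2 ^ 2 * (2 * ε) by ring,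
      Real.sqrt_mul (by positivity), Real.sqrt_sq zero_le_two]
  refine div_le_of_le_mul₀ (by positivity) K.cast_nonneg ?_
  calc (U - L) * √ℓ ≤ K * √(8 * ε / ℓ) * √ℓ := by gcongr
    _ = K * (2 * √(2 * ε)) := by rw [mul_assoc, hsqrt]
end

section
/- Let $f: 2^{[m]} \to \mathbb{R}$ be monotone non-decreasing and submodular with $f(\emptyset) \geq 0$, and let $C \in \mathbb{N}$ with $C \leq m$. Let $S_0 = \emptyset$ and for $t = 1, \ldots, C$ let $S_t = S_{t-1} \cup \{i_t\}$ where $i_t \in \arg\max_{i \notin S_{t-1}} \big(f(S_{t-1} \cup \{i\}) - f(S_{t-1})\big)$. Then $f(S_C) \geq (1 - (1 - 1/C)^C)\, \max_{|S| \leq C} f(S) \geq (1 - 1/e)\, \max_{|S| \leq C} f(S)$. -/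
/-! Let `T` be any set with `|T| ≤ C`. Submodularity bounds `f T - f S` by the sum of the
marginal gains of the elements of `T` at `S`, each of which is at most the greedy gain; hence the
gap `f T - f Sₜ` is at most `C` times the gain of step `t + 1`, i.e. it shrinks by a factor
`1 - 1/C` per step. After `C` steps the gap is at most `(1 - 1/C)^C (f T - f ∅)`, and
`(1 - 1/C)^C ≤ e⁻¹`. -/

section Submodular

variable {α : Type*} [DecidableEq α] {f : Finset α → ℝ}

theorem sub_le_sum_marginal_of_submodular
    (hsub : ∀ A B : Finset α, ∀ j : α, A ⊆ B → j ∉ B →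
      f (insert j A) - f A ≥ f (insert j B) - f B)
    (A D : Finset α) :
    f (A ∪ D) - f A ≤ ∑ j ∈ D, (f (insert j A) - f A) := by
  induction D using Finset.induction_on with
  | empty => simp
  | @insert j D hjD ih =>
    rw [Finset.sum_insert hjD, Finset.union_insert]
    by_cases hjA : j ∈ A
    · rw [Finset.insert_eq_of_mem (Finset.mem_union_left D hjA), Finset.insert_eq_of_mem hjA]
      linarith
    · have := hsub A (A ∪ D) j Finset.subset_union_left (by simp [hjA, hjD])
      linarith

theorem sub_le_card_mul_greedy_gain
    (hmono : ∀ A B : Finset α, A ⊆ B → f A ≤ f B)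
    (hsub : ∀ A B : Finset α, ∀ j : α, A ⊆ B → j ∉ B →
      f (insert j A) - f A ≥ f (insert j B) - f B)
    {S : Finset α} {g : α} (hg : ∀ i ∉ S, f (insert i S) - f S ≤ f (insert g S) - f S)
    {T : Finset α} {k : ℕ} (hT : T.card ≤ k) :
    f T - f S ≤ k * (f (insert g S) - f S) := by
  have hgain : 0 ≤ f (insert g S) - f S := sub_nonneg.2 (hmono _ _ (Finset.subset_insert g S))
  have hmarg : ∀ j ∈ T, f (insert j S) - f S ≤ f (insert g S) - f S := by
    intro j _
    by_cases hjS : j ∈ S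
    · rwa [Finset.insert_eq_of_mem hjS, sub_self]
    · exact hg j hjS
  calc f T - f S ≤ f (S ∪ T) - f S := by gcongr; exact hmono _ _ Finset.subset_union_right
    _ ≤ ∑ j ∈ T, (f (insert j S) - f S) := sub_le_sum_marginal_of_submodular hsub S T
    _ ≤ T.card * (f (insert g S) - f S) := by
      simpa only [Finset.sum_const, nsmul_eq_mul] using Finset.sum_le_sum hmarg
    _ ≤ k * (f (insert g S) - f S) := by gcongr

end Submodular

theorem sub_le_one_sub_inv_mul_of_sub_le_mul {a a' b c : ℝ} (hc : 0 < c)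
    (h : b - a ≤ c * (a' - a)) : b - a' ≤ (1 - 1 / c) * (b - a) := by
  have : (1 - 1 / c) * (b - a) - (b - a') = (c * (a' - a) - (b - a)) / c := by
    field_simp; ring
  linarith [div_nonneg (sub_nonneg.2 h) hc.le]

theorem stmt_13_general (m C : ℕ) (hC : 1 ≤ C)
    (f : Finset (Fin m) → ℝ)
    (hmono : ∀ A B : Finset (Fin m), A ⊆ B → f A ≤ f B)
    (hsub : ∀ A B : Finset (Fin m), ∀ j : Fin m, A ⊆ B → j ∉ B →
      f (insert j A) - f A ≥ f (insert j B) - f B)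
    (hf0 : 0 ≤ f ∅)
    (S : ℕ → Finset (Fin m)) (g : ℕ → Fin m)
    (hS0 : S 0 = ∅)
    (hgreedy : ∀ t < C, g (t + 1) ∉ S t ∧
      (∀ i : Fin m, i ∉ S t →
        f (insert i (S t)) - f (S t) ≤ f (insert (g (t + 1)) (S t)) - f (S t)) ∧
      S (t + 1) = insert (g (t + 1)) (S t)) :
    ∀ T : Finset (Fin m), T.card ≤ C →
      (1 - (1 - 1 / (C : ℝ)) ^ C) * f T ≤ f (S C) ∧
      (1 - 1 / Real.exp 1) * f T ≤ f (S C) := by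
  intro T hT
  set r : ℝ := 1 - 1 / (C : ℝ)
  have hCpos : (0 : ℝ) < C := by exact_mod_cast hC
  have hr : 0 ≤ r := sub_nonneg.2 ((div_le_one hCpos).2 (by exact_mod_cast hC))
  have hstep : ∀ t < C, f T - f (S (t + 1)) ≤ r * (f T - f (S t)) := by
    intro t ht
    obtain ⟨-, hbest, hnext⟩ := hgreedy t ht
    rw [hnext]
    exact sub_le_one_sub_inv_mul_of_sub_le_mul hCpos
      (sub_le_card_mul_greedy_gain hmono hsub hbest hT)
  have hdecay : f T - f (S C) ≤ r ^ C * (f T - f ∅) :=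
    hS0 ▸ le_geom (u := fun t ↦ f T - f (S t)) hr C hstep
  have hgreedy_ratio : (1 - r ^ C) * f T ≤ f (S C) := by
    linarith [mul_nonneg (pow_nonneg hr C) hf0]
  have hr_exp : r ^ C ≤ 1 / Real.exp 1 := by
    rw [one_div, ← Real.exp_neg]
    exact Real.one_sub_div_pow_le_exp_neg (by exact_mod_cast hC)
  have hfT : 0 ≤ f T := hf0.trans (hmono ∅ T (Finset.empty_subset T))
  exact ⟨hgreedy_ratio,
    (mul_le_mul_of_nonneg_right (by linarith) hfT).trans hgreedy_ratio⟩

/-- the Nemhauser–Wolsey–Fisher greedy guarantee for maximizing a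
monotone submodular set function under a cardinality constraint. -/
theorem stmt_13 (m C : ℕ) (hC : 1 ≤ C) (hCm : C ≤ m)
    (f : Finset (Fin m) → ℝ)
    (hmono : ∀ A B : Finset (Fin m), A ⊆ B → f A ≤ f B)
    (hsub : ∀ A B : Finset (Fin m), ∀ j : Fin m, A ⊆ B → j ∉ B →
      f (insert j A) - f A ≥ f (insert j B) - f B)
    (hf0 : 0 ≤ f ∅)
    (S : ℕ → Finset (Fin m)) (g : ℕ → Fin m)
    (hS0 : S 0 = ∅)
    (hgreedy : ∀ t < C, g (t + 1) ∉ S t ∧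
      (∀ i : Fin m, i ∉ S t →
        f (insert i (S t)) - f (S t) ≤ f (insert (g (t + 1)) (S t)) - f (S t)) ∧
      S (t + 1) = insert (g (t + 1)) (S t)) :
    ∀ T : Finset (Fin m), T.card ≤ C →
      (1 - (1 - 1 / (C : ℝ)) ^ C) * f T ≤ f (S C) ∧
      (1 - 1 / Real.exp 1) * f T ≤ f (S C) :=
  stmt_13_general m C hC f hmono hsub hf0 S g hS0 hgreedy
end
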